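/- Fix k ≥ 1. Let 0 < σ < 1/2 and let 0 < δ < 1 be such that 1/δ is a positive integer; set c_k = 1/(100 k³). Let p_1,…,p_k, q_1,…,q_k be natural numbers with p_m ≤ c_k δ^{σ-1} and q_m ≤ c_k δ^{2σ-1} for all 1 ≤ m ≤ k, and set s = ∑_{m=1}^k p_m δ^{-σ-m+1} and t = 2 ∑_{m=1}^k q_m δ^{-2σ-m+1}. Then for every ξ in the support of g_k, i.e. ξ = ∑_{r=1}^k ℓ_r δ^{σ+r-1} + ε with positive integers ℓ_r ≤ δ^{-σ} and |ε| ≤ δ^k, the distance from the phase sξ - tξ²/2 to the nearest integer is at most 1/10. -/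
import Mathlib


open Real Finset

/-- For `k ≥ 1`, `0 < σ < 1/2`, `0 < δ < 1` with `1/δ ∈ ℕ`, and
`p_m ≤ c_k δ^{σ-1}`, `q_m ≤ c_k δ^{2σ-1}` with `c_k = 1/(100k³)`, the phase `sξ - tξ²/2`
with `s = ∑_m p_m δ^{-σ-m+1}`, `t = 2∑_m q_m δ^{-2σ-m+1}` is within `1/10` of an integer
for every `ξ = ∑_r ℓ_r δ^{σ+r-1} + ε` in the support of `g_k`. -/
theorem stmt9 (k : ℕ) (hk : 1 ≤ k) (σ δ : ℝ) (hσ0 : 0 < σ) (hσ1 : σ < 1/2)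
    (hδ0 : 0 < δ) (hδ1 : δ < 1) (hδint : ∃ N : ℕ, 0 < N ∧ δ⁻¹ = (N : ℝ))
    (p q : Fin k → ℕ)
    (hp : ∀ m, (p m : ℝ) ≤ (1 / (100 * (k : ℝ) ^ 3)) * δ ^ (σ - 1))
    (hq : ∀ m, (q m : ℝ) ≤ (1 / (100 * (k : ℝ) ^ 3)) * δ ^ (2*σ - 1))
    (s t : ℝ)
    (hs : s = ∑ m : Fin k, (p m : ℝ) * δ ^ (-σ - (m : ℕ)))
    (ht : t = 2 * ∑ m : Fin k, (q m : ℝ) * δ ^ (-(2*σ) - (m : ℕ)))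
    (ℓ : Fin k → ℕ) (hℓ : ∀ r, 1 ≤ ℓ r ∧ (ℓ r : ℝ) ≤ δ ^ (-σ))
    (ε : ℝ) (hε : |ε| ≤ δ ^ k)
    (ξ : ℝ) (hξ : ξ = (∑ r : Fin k, (ℓ r : ℝ) * δ ^ (σ + (r : ℕ))) + ε) :
    ∃ m : ℤ, |s * ξ - t * ξ ^ 2 / 2 - (m : ℝ)| ≤ 1/10 := by
  classical
  obtain ⟨N, hN0, hNδ⟩ := hδint
  have hδN : δ = ((N : ℝ))⁻¹ := by rw [← hNδ, inv_inv]
  have hk1 : (1:ℝ) ≤ (k:ℝ) := by exact_mod_cast hk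
  have hk0 : (0:ℝ) < (k:ℝ) := by linarith
  set c : ℝ := 1 / (100 * (k:ℝ)^3) with hcdef
  have hcpos : 0 < c := by positivity
  have hδle : δ ≤ 1 := hδ1.le
  have hradd : ∀ x y : ℝ, δ ^ x * δ ^ y = δ ^ (x + y) := fun x y => (Real.rpow_add hδ0 x y).symm
  have hr1 : ∀ x : ℝ, 0 ≤ x → δ ^ x ≤ 1 := fun x hx => Real.rpow_le_one hδ0.le hδle hx
  have hrnn : ∀ x : ℝ, 0 ≤ δ ^ x := fun x => Real.rpow_nonneg hδ0.le x
  have hint : ∀ a b : ℕ, b ≤ a → δ ^ ((b:ℝ) - (a:ℝ)) = ((N:ℝ)) ^ (a - b) := by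
    intro a b hba
    have h1 : (b:ℝ) - (a:ℝ) = -(((a - b : ℕ)):ℝ) := by
      rw [Nat.cast_sub hba]; ring
    rw [h1, Real.rpow_neg hδ0.le, Real.rpow_natCast, hδN, inv_pow, inv_inv]
  -- bound each summand of A
  have hterm : ∀ r : Fin k, (ℓ r : ℝ) * δ ^ (σ + (r:ℕ)) ≤ 1 := by
    intro r
    calc (ℓ r : ℝ) * δ ^ (σ + (r:ℕ)) ≤ δ ^ (-σ) * δ ^ (σ + (r:ℕ)) :=
          mul_le_mul_of_nonneg_right (hℓ r).2 (hrnn _)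
      _ = δ ^ (-σ + (σ + (r:ℕ))) := hradd _ _
      _ ≤ 1 := hr1 _ (by have h9 : (0:ℝ) ≤ ((r:ℕ):ℝ) := Nat.cast_nonneg _; linarith)
  set A : ℝ := ∑ r : Fin k, (ℓ r : ℝ) * δ ^ (σ + (r:ℕ)) with hAdef
  have hA0 : 0 ≤ A := Finset.sum_nonneg fun r _ => by positivity
  have hAk : A ≤ (k:ℝ) := by
    calc A ≤ ∑ _r : Fin k, (1:ℝ) := Finset.sum_le_sum fun r _ => hterm r
      _ = (k:ℝ) := by simp
  -- bound on s
  have hδk : ∀ m : Fin k, δ ^ (-1 - ((m:ℕ):ℝ)) ≤ δ ^ (-(k:ℝ)) := by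
    intro m
    apply Real.rpow_le_rpow_of_exponent_ge hδ0 hδle
    have hm : ((m:ℕ):ℝ) + 1 ≤ (k:ℝ) := by exact_mod_cast m.isLt
    linarith
  have hs0 : 0 ≤ s := by
    rw [hs]; exact Finset.sum_nonneg fun m _ => by positivity
  have hs_le : s ≤ c * k * δ ^ (-(k:ℝ)) := by
    rw [hs]
    calc ∑ m : Fin k, (p m : ℝ) * δ ^ (-σ - (m:ℕ))
        ≤ ∑ _m : Fin k, c * δ ^ (-(k:ℝ)) := by
          apply Finset.sum_le_sum
          intro m _
          calc (p m : ℝ) * δ ^ (-σ - (m:ℕ)) ≤ (c * δ ^ (σ-1)) * δ ^ (-σ - (m:ℕ)) :=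
                mul_le_mul_of_nonneg_right (hp m) (hrnn _)
            _ = c * δ ^ ((σ-1) + (-σ - (m:ℕ))) := by rw [mul_assoc, hradd]
            _ = c * δ ^ (-1 - ((m:ℕ):ℝ)) := by
                have h9 : (σ-1) + (-σ - ((m:ℕ):ℝ)) = -1 - ((m:ℕ):ℝ) := by ring
                rw [h9]
            _ ≤ c * δ ^ (-(k:ℝ)) := mul_le_mul_of_nonneg_left (hδk m) hcpos.le
      _ = c * k * δ ^ (-(k:ℝ)) := by
          rw [Finset.sum_const, Finset.card_univ, Fintype.card_fin]; push_cast; ring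
  set S : ℝ := ∑ m : Fin k, (q m : ℝ) * δ ^ (-(2*σ) - (m:ℕ)) with hSdef
  have hS0 : 0 ≤ S := Finset.sum_nonneg fun m _ => by positivity
  have hS_le : S ≤ c * k * δ ^ (-(k:ℝ)) := by
    calc S ≤ ∑ _m : Fin k, c * δ ^ (-(k:ℝ)) := by
          apply Finset.sum_le_sum
          intro m _
          calc (q m : ℝ) * δ ^ (-(2*σ) - (m:ℕ)) ≤ (c * δ ^ (2*σ-1)) * δ ^ (-(2*σ) - (m:ℕ)) :=
                mul_le_mul_of_nonneg_right (hq m) (hrnn _)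
            _ = c * δ ^ ((2*σ-1) + (-(2*σ) - (m:ℕ))) := by rw [mul_assoc, hradd]
            _ = c * δ ^ (-1 - ((m:ℕ):ℝ)) := by
                have h9 : (2*σ-1) + (-(2*σ) - ((m:ℕ):ℝ)) = -1 - ((m:ℕ):ℝ) := by ring
                rw [h9]
            _ ≤ c * δ ^ (-(k:ℝ)) := mul_le_mul_of_nonneg_left (hδk m) hcpos.le
      _ = c * k * δ ^ (-(k:ℝ)) := by
          rw [Finset.sum_const, Finset.card_univ, Fintype.card_fin]; push_cast; ring
  -- useful δ^k facts
  have hδknat : (δ:ℝ) ^ (k:ℕ) = δ ^ ((k:ℕ):ℝ) := (Real.rpow_natCast δ k).symm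
  have hδcancel : δ ^ (-(k:ℝ)) * δ ^ (k:ℕ) = 1 := by
    rw [hδknat, hradd]; simp
  have hδknn : (0:ℝ) ≤ δ ^ (k:ℕ) := by positivity
  have hδkle1 : (δ:ℝ) ^ (k:ℕ) ≤ 1 := by
    rw [hδknat]; exact hr1 _ (by positivity)
  -- the F and G families
  set F1 : Fin k → Fin k → ℝ :=
    fun m r => (p m : ℝ) * (ℓ r : ℝ) * δ ^ (((r:ℕ):ℝ) - ((m:ℕ):ℝ)) with hF1def
  set G1 : Fin k → Fin k → ℝ :=
    fun m r => if (r:ℕ) ≤ (m:ℕ) then (p m : ℝ) * (ℓ r : ℝ) * (N:ℝ) ^ ((m:ℕ) - (r:ℕ)) else 0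
    with hG1def
  set F2 : Fin k → Fin k → Fin k → ℝ :=
    fun m r r' => (q m : ℝ) * (ℓ r : ℝ) * (ℓ r' : ℝ) * δ ^ ((((r:ℕ):ℝ) + ((r':ℕ):ℝ)) - ((m:ℕ):ℝ))
    with hF2def
  set G2 : Fin k → Fin k → Fin k → ℝ :=
    fun m r r' => if (r:ℕ) + (r':ℕ) ≤ (m:ℕ) then
      (q m : ℝ) * (ℓ r : ℝ) * (ℓ r' : ℝ) * (N:ℝ) ^ ((m:ℕ) - (r:ℕ) - (r':ℕ)) else 0
    with hG2def
  -- per-term bounds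
  have hF1G1 : ∀ m r : Fin k, |F1 m r - G1 m r| ≤ c := by
    intro m r
    by_cases h : (r:ℕ) ≤ (m:ℕ)
    · have : F1 m r = G1 m r := by
        rw [hF1def, hG1def]; simp only [if_pos h]
        rw [hint (m:ℕ) (r:ℕ) h]
      simp [this, hcpos.le]
    · have hG : G1 m r = 0 := by rw [hG1def]; simp [h]
      have hF0 : 0 ≤ F1 m r := by rw [hF1def]; positivity
      have hFle : F1 m r ≤ c := by
        rw [hF1def]
        calc (p m : ℝ) * (ℓ r : ℝ) * δ ^ (((r:ℕ):ℝ) - ((m:ℕ):ℝ))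
            ≤ (c * δ ^ (σ-1)) * (δ ^ (-σ)) * δ ^ (((r:ℕ):ℝ) - ((m:ℕ):ℝ)) := by
              apply mul_le_mul_of_nonneg_right _ (hrnn _)
              exact mul_le_mul (hp m) (hℓ r).2 (Nat.cast_nonneg _) (by positivity)
          _ = c * δ ^ ((σ-1) + -σ + (((r:ℕ):ℝ) - ((m:ℕ):ℝ))) := by
              rw [mul_assoc, mul_assoc, hradd, hradd]; ring_nf
          _ ≤ c * 1 := by
              apply mul_le_mul_of_nonneg_left _ hcpos.le
              apply hr1
              have : ((m:ℕ):ℝ) + 1 ≤ ((r:ℕ):ℝ) := by exact_mod_cast Nat.lt_of_not_le h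
              linarith
          _ = c := mul_one c
      rw [hG, sub_zero, abs_of_nonneg hF0]; exact hFle
  have hF2G2 : ∀ m r r' : Fin k, |F2 m r r' - G2 m r r'| ≤ c := by
    intro m r r'
    by_cases h : (r:ℕ) + (r':ℕ) ≤ (m:ℕ)
    · have hcast : (((r:ℕ):ℝ) + ((r':ℕ):ℝ)) - ((m:ℕ):ℝ) = (((r:ℕ)+(r':ℕ):ℕ):ℝ) - ((m:ℕ):ℝ) := by
        push_cast; ring
      have : F2 m r r' = G2 m r r' := by
        rw [hF2def, hG2def]; simp only [if_pos h]
        rw [hcast, hint (m:ℕ) ((r:ℕ)+(r':ℕ)) h, Nat.sub_sub]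
      simp [this, hcpos.le]
    · have hG : G2 m r r' = 0 := by rw [hG2def]; simp [h]
      have hF0 : 0 ≤ F2 m r r' := by rw [hF2def]; positivity
      have hFle : F2 m r r' ≤ c := by
        rw [hF2def]
        calc (q m : ℝ) * (ℓ r : ℝ) * (ℓ r' : ℝ) * δ ^ ((((r:ℕ):ℝ) + ((r':ℕ):ℝ)) - ((m:ℕ):ℝ))
            ≤ (c * δ ^ (2*σ-1)) * (δ ^ (-σ)) * (δ ^ (-σ)) * δ ^ ((((r:ℕ):ℝ) + ((r':ℕ):ℝ)) - ((m:ℕ):ℝ)) := by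
              apply mul_le_mul_of_nonneg_right _ (hrnn _)
              apply mul_le_mul _ (hℓ r').2 (Nat.cast_nonneg _) (by positivity)
              exact mul_le_mul (hq m) (hℓ r).2 (Nat.cast_nonneg _) (by positivity)
          _ = c * δ ^ ((2*σ-1) + -σ + -σ + ((((r:ℕ):ℝ) + ((r':ℕ):ℝ)) - ((m:ℕ):ℝ))) := by
              rw [mul_assoc, mul_assoc, mul_assoc, hradd, hradd, hradd]; ring_nf
          _ ≤ c * 1 := by
              apply mul_le_mul_of_nonneg_left _ hcpos.le
              apply hr1
              have : ((m:ℕ):ℝ) + 1 ≤ ((r:ℕ):ℝ) + ((r':ℕ):ℝ) := by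
                exact_mod_cast Nat.lt_of_not_le h
              linarith
          _ = c := mul_one c
      rw [hG, sub_zero, abs_of_nonneg hF0]; exact hFle
  -- the integer
  set M : ℤ :=
    (∑ m : Fin k, ∑ r : Fin k, if (r:ℕ) ≤ (m:ℕ) then
        (p m : ℤ) * (ℓ r : ℤ) * (N:ℤ) ^ ((m:ℕ) - (r:ℕ)) else 0)
    - (∑ m : Fin k, ∑ r : Fin k, ∑ r' : Fin k, if (r:ℕ) + (r':ℕ) ≤ (m:ℕ) then
        (q m : ℤ) * (ℓ r : ℤ) * (ℓ r' : ℤ) * (N:ℤ) ^ ((m:ℕ) - (r:ℕ) - (r':ℕ)) else 0)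
    with hMdef
  have hM : (M:ℝ) = (∑ m : Fin k, ∑ r : Fin k, G1 m r)
      - (∑ m : Fin k, ∑ r : Fin k, ∑ r' : Fin k, G2 m r r') := by
    rw [hMdef, hG1def, hG2def]
    push_cast [apply_ite (fun z : ℤ => (z:ℝ))]
    ring
  -- expansion identities
  have e1 : s * A = ∑ m : Fin k, ∑ r : Fin k, F1 m r := by
    rw [hs, hAdef, Finset.sum_mul_sum]
    apply Finset.sum_congr rfl; intro m _
    apply Finset.sum_congr rfl; intro r _
    rw [hF1def]
    have : (-σ - ((m:ℕ):ℝ)) + (σ + ((r:ℕ):ℝ)) = ((r:ℕ):ℝ) - ((m:ℕ):ℝ) := by ring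
    rw [show (p m : ℝ) * δ ^ (-σ - ((m:ℕ):ℝ)) * ((ℓ r : ℝ) * δ ^ (σ + ((r:ℕ):ℝ))) =
        (p m : ℝ) * (ℓ r : ℝ) * (δ ^ (-σ - ((m:ℕ):ℝ)) * δ ^ (σ + ((r:ℕ):ℝ))) from by ring,
      hradd, this]
  have eA2 : A * A = ∑ r : Fin k, ∑ r' : Fin k,
      (ℓ r : ℝ) * (ℓ r' : ℝ) * δ ^ ((σ + ((r:ℕ):ℝ)) + (σ + ((r':ℕ):ℝ))) := by
    rw [hAdef, Finset.sum_mul_sum]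
    apply Finset.sum_congr rfl; intro r _
    apply Finset.sum_congr rfl; intro r' _
    rw [show (ℓ r : ℝ) * δ ^ (σ + ((r:ℕ):ℝ)) * ((ℓ r' : ℝ) * δ ^ (σ + ((r':ℕ):ℝ))) =
        (ℓ r : ℝ) * (ℓ r' : ℝ) * (δ ^ (σ + ((r:ℕ):ℝ)) * δ ^ (σ + ((r':ℕ):ℝ))) from by ring,
      hradd]
  have e2 : S * (A * A) = ∑ m : Fin k, ∑ r : Fin k, ∑ r' : Fin k, F2 m r r' := by
    rw [eA2, hSdef, Finset.sum_mul_sum]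
    apply Finset.sum_congr rfl; intro m _
    apply Finset.sum_congr rfl; intro r _
    rw [Finset.mul_sum]
    apply Finset.sum_congr rfl; intro r' _
    rw [hF2def,
      show (q m : ℝ) * δ ^ (-(2*σ) - ((m:ℕ):ℝ)) *
          ((ℓ r : ℝ) * (ℓ r' : ℝ) * δ ^ ((σ + ((r:ℕ):ℝ)) + (σ + ((r':ℕ):ℝ)))) =
          (q m : ℝ) * (ℓ r : ℝ) * (ℓ r' : ℝ) *
          (δ ^ (-(2*σ) - ((m:ℕ):ℝ)) * δ ^ ((σ + ((r:ℕ):ℝ)) + (σ + ((r':ℕ):ℝ)))) from by ring,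
      hradd,
      show (-(2*σ) - ((m:ℕ):ℝ)) + ((σ + ((r:ℕ):ℝ)) + (σ + ((r':ℕ):ℝ))) =
          (((r:ℕ):ℝ) + ((r':ℕ):ℝ)) - ((m:ℕ):ℝ) from by ring]
  have key : s * ξ - t * ξ ^ 2 / 2 - (M:ℝ) =
      (∑ m : Fin k, ∑ r : Fin k, (F1 m r - G1 m r))
      - (∑ m : Fin k, ∑ r : Fin k, ∑ r' : Fin k, (F2 m r r' - G2 m r r'))
      + s * ε - 2 * S * A * ε - S * ε ^ 2 := by
    have hts : t = 2 * S := by rw [ht, hSdef]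
    have expand : s * ξ - t * ξ ^ 2 / 2 = s * A + s * ε - S * (A * A) - 2*S*A*ε - S*ε^2 := by
      rw [hξ, hts]; ring
    rw [expand, e1, e2, hM]
    simp only [Finset.sum_sub_distrib]
    ring
  have hB1 : |∑ m : Fin k, ∑ r : Fin k, (F1 m r - G1 m r)| ≤ (k:ℝ) * ((k:ℝ) * c) := by
    calc |∑ m : Fin k, ∑ r : Fin k, (F1 m r - G1 m r)|
        ≤ ∑ m : Fin k, |∑ r : Fin k, (F1 m r - G1 m r)| := Finset.abs_sum_le_sum_abs _ _
      _ ≤ ∑ _m : Fin k, ((k:ℝ) * c) := by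
          apply Finset.sum_le_sum; intro m _
          calc |∑ r : Fin k, (F1 m r - G1 m r)| ≤ ∑ r : Fin k, |F1 m r - G1 m r| :=
                Finset.abs_sum_le_sum_abs _ _
            _ ≤ ∑ _r : Fin k, c := Finset.sum_le_sum fun r _ => hF1G1 m r
            _ = (k:ℝ) * c := by
                rw [Finset.sum_const, Finset.card_univ, Fintype.card_fin, nsmul_eq_mul]
      _ = (k:ℝ) * ((k:ℝ) * c) := by
          rw [Finset.sum_const, Finset.card_univ, Fintype.card_fin, nsmul_eq_mul]
  have hB2 : |∑ m : Fin k, ∑ r : Fin k, ∑ r' : Fin k, (F2 m r r' - G2 m r r')| ≤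
      (k:ℝ) * ((k:ℝ) * ((k:ℝ) * c)) := by
    calc |∑ m : Fin k, ∑ r : Fin k, ∑ r' : Fin k, (F2 m r r' - G2 m r r')|
        ≤ ∑ m : Fin k, |∑ r : Fin k, ∑ r' : Fin k, (F2 m r r' - G2 m r r')| :=
          Finset.abs_sum_le_sum_abs _ _
      _ ≤ ∑ _m : Fin k, ((k:ℝ) * ((k:ℝ) * c)) := by
          apply Finset.sum_le_sum; intro m _
          calc |∑ r : Fin k, ∑ r' : Fin k, (F2 m r r' - G2 m r r')|
              ≤ ∑ r : Fin k, |∑ r' : Fin k, (F2 m r r' - G2 m r r')| :=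
                Finset.abs_sum_le_sum_abs _ _
            _ ≤ ∑ _r : Fin k, ((k:ℝ) * c) := by
                apply Finset.sum_le_sum; intro r _
                calc |∑ r' : Fin k, (F2 m r r' - G2 m r r')|
                    ≤ ∑ r' : Fin k, |F2 m r r' - G2 m r r'| := Finset.abs_sum_le_sum_abs _ _
                  _ ≤ ∑ _r' : Fin k, c := Finset.sum_le_sum fun r' _ => hF2G2 m r r'
                  _ = (k:ℝ) * c := by
                      rw [Finset.sum_const, Finset.card_univ, Fintype.card_fin, nsmul_eq_mul]
            _ = (k:ℝ) * ((k:ℝ) * c) := by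
                rw [Finset.sum_const, Finset.card_univ, Fintype.card_fin, nsmul_eq_mul]
      _ = (k:ℝ) * ((k:ℝ) * ((k:ℝ) * c)) := by
          rw [Finset.sum_const, Finset.card_univ, Fintype.card_fin, nsmul_eq_mul]
  have h3 : |s * ε| ≤ c * (k:ℝ) := by
    rw [abs_mul, abs_of_nonneg hs0]
    calc s * |ε| ≤ (c * k * δ ^ (-(k:ℝ))) * δ ^ (k:ℕ) :=
          mul_le_mul hs_le hε (abs_nonneg ε)
            (mul_nonneg (mul_nonneg hcpos.le hk0.le) (hrnn _))
      _ = c * k * (δ ^ (-(k:ℝ)) * δ ^ (k:ℕ)) := by ring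
      _ = c * (k:ℝ) := by rw [hδcancel, mul_one]
  have h4 : |2 * S * A * ε| ≤ 2 * c * (k:ℝ) * (k:ℝ) := by
    have hSA : (0:ℝ) ≤ 2 * S * A := mul_nonneg (mul_nonneg (by norm_num) hS0) hA0
    rw [abs_mul, abs_of_nonneg hSA]
    calc 2 * S * A * |ε| ≤ 2 * (c * k * δ ^ (-(k:ℝ))) * (k:ℝ) * δ ^ (k:ℕ) := by
          gcongr
      _ = 2 * c * (k:ℝ) * (k:ℝ) * (δ ^ (-(k:ℝ)) * δ ^ (k:ℕ)) := by ring
      _ = 2 * c * (k:ℝ) * (k:ℝ) := by rw [hδcancel, mul_one]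
  have h5 : |S * ε ^ 2| ≤ c * (k:ℝ) := by
    have hε2 : ε ^ 2 ≤ δ ^ (k:ℕ) * δ ^ (k:ℕ) := by
      have : ε ^ 2 = |ε| * |ε| := by rw [← abs_mul, abs_of_nonneg (mul_self_nonneg ε), sq]
      rw [this]
      exact mul_le_mul hε hε (abs_nonneg ε) hδknn
    rw [abs_mul, abs_of_nonneg hS0, abs_of_nonneg (sq_nonneg ε)]
    calc S * ε ^ 2 ≤ (c * k * δ ^ (-(k:ℝ))) * (δ ^ (k:ℕ) * δ ^ (k:ℕ)) := by
          apply mul_le_mul hS_le hε2 (sq_nonneg ε)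
            (mul_nonneg (mul_nonneg hcpos.le hk0.le) (hrnn _))
      _ = c * k * (δ ^ (-(k:ℝ)) * δ ^ (k:ℕ)) * δ ^ (k:ℕ) := by ring
      _ = c * k * δ ^ (k:ℕ) := by rw [hδcancel, mul_one]
      _ ≤ c * k * 1 := by
          apply mul_le_mul_of_nonneg_left hδkle1 (mul_nonneg hcpos.le hk0.le)
      _ = c * (k:ℝ) := mul_one _
  refine ⟨M, ?_⟩
  rw [key]
  have tri : ∀ a b x y z : ℝ, |a - b + x - y - z| ≤ |a| + |b| + |x| + |y| + |z| := by
    intro a b x y z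
    calc |a - b + x - y - z| = |(((a + -b) + x) + -y) + -z| := by ring_nf
      _ ≤ |((a + -b) + x) + -y| + |(-z)| := abs_add_le _ _
      _ ≤ (|(a + -b) + x| + |(-y)|) + |(-z)| := by gcongr; exact abs_add_le _ _
      _ ≤ ((|a + -b| + |x|) + |(-y)|) + |(-z)| := by gcongr; exact abs_add_le _ _
      _ ≤ (((|a| + |(-b)|) + |x|) + |(-y)|) + |(-z)| := by gcongr; exact abs_add_le _ _
      _ = |a| + |b| + |x| + |y| + |z| := by rw [abs_neg, abs_neg, abs_neg]
  have htotal := tri (∑ m : Fin k, ∑ r : Fin k, (F1 m r - G1 m r))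
    (∑ m : Fin k, ∑ r : Fin k, ∑ r' : Fin k, (F2 m r r' - G2 m r r'))
    (s * ε) (2 * S * A * ε) (S * ε ^ 2)
  have hk3ne : (100:ℝ) * (k:ℝ) ^ 3 ≠ 0 := by positivity
  have hck3 : c * (k:ℝ) ^ 3 = 1 / 100 := by
    rw [hcdef]
    field_simp
  have hkk2 : c * (k:ℝ) * (k:ℝ) ≤ c * (k:ℝ) ^ 3 := by
    have h9 : (0:ℝ) ≤ c * (k:ℝ) * (k:ℝ) * ((k:ℝ) - 1) :=
      mul_nonneg (mul_nonneg (mul_nonneg hcpos.le hk0.le) hk0.le) (by linarith)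
    have e9 : c * (k:ℝ) ^ 3 = c * (k:ℝ) * (k:ℝ) + c * (k:ℝ) * (k:ℝ) * ((k:ℝ) - 1) := by ring
    linarith
  have hkk1 : c * (k:ℝ) ≤ c * (k:ℝ) ^ 3 := by
    have h9 : (0:ℝ) ≤ c * (k:ℝ) * ((k:ℝ) - 1) * ((k:ℝ) + 1) :=
      mul_nonneg (mul_nonneg (mul_nonneg hcpos.le hk0.le) (by linarith)) (by linarith)
    have e9 : c * (k:ℝ) ^ 3 = c * (k:ℝ) + c * (k:ℝ) * ((k:ℝ) - 1) * ((k:ℝ) + 1) := by ring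
    linarith
  exact le_trans htotal (by linarith [hB1, hB2, h3, h4, h5])
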